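/- arXiv:1701.00278 — 4 statements merged into one kernel-verified Lean document; each statement's English description precedes it below -/
import Mathlib

section
/- For a prime p and positive integer n, the matrix A_{p^n} defined by A_{p^n}(i,j) = p^n·gcd(p^i,p^j)^2/(p^j·gcd(p^{2i},p^n)) for i,j ∈ {0,...,n} is invertible over the rationals, and its inverse is the tridiagonal matrix M with entries p^n·(p − 1/p)·M(i,j) equal to: p if i=j=0 or i=j=n; −p^{min(j, n−j)} if |i−j|=1; p^{min(j−1, n−j−1)}·(p^2+1) if 0<i=j<n; and 0 otherwise. -/
/-!
Since `gcd(p^a, p^b) = p^min(a,b)`, the entries are `A(i,j) = p^max(i, n-i) · p^(-|i-j|)`: the order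
matrix is a diagonal matrix times the Kac–Murdock–Szegő matrix `(ρ^|i-j|)` with `ρ = 1/p`. The
inverse of the latter is `(1 - ρ²)⁻¹` times the tridiagonal matrix with `-ρ` next to the diagonal
and `(1, 1 + ρ², …, 1 + ρ², 1)` on it, and the claimed inverse of `A` is exactly this matrix times
the inverse of the diagonal factor.
-/

/-- The order matrix `A_{p^n}` of level `p^n`, with rows and columns indexed by
`i, j ∈ {0, …, n}`: `A_{p^n}(i,j) = p^n · gcd(p^i, p^j)^2 / (p^j · gcd(p^{2i}, p^n))`. -/
noncomputable def orderMatrix (p n : ℕ) : Matrix (Fin (n + 1)) (Fin (n + 1)) ℚ :=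
  Matrix.of fun i j =>
    ((p ^ n * (Nat.gcd (p ^ (i : ℕ)) (p ^ (j : ℕ))) ^ 2 : ℕ) : ℚ) /
      ((p ^ (j : ℕ) * Nat.gcd (p ^ (2 * (i : ℕ))) (p ^ n) : ℕ) : ℚ)

/-- The claimed tridiagonal inverse of `A_{p^n}`: `p^n(p - 1/p) · M(i,j)` equals `p` if
`i = j = 0` or `i = j = n`; `-p^{min(j, n-j)}` if `|i - j| = 1`;
`p^{min(j-1, n-j-1)}·(p^2+1)` if `0 < i = j < n`; and `0` otherwise. -/
noncomputable def orderMatrixInv (p n : ℕ) : Matrix (Fin (n + 1)) (Fin (n + 1)) ℚ :=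
  Matrix.of fun i j =>
    (if (i : ℕ) = j ∧ ((i : ℕ) = 0 ∨ (i : ℕ) = n) then (p : ℚ)
      else if (i : ℕ) + 1 = (j : ℕ) ∨ (j : ℕ) + 1 = (i : ℕ) then
        -(p : ℚ) ^ (min (j : ℕ) (n - (j : ℕ)))
      else if (i : ℕ) = (j : ℕ) then
        (p : ℚ) ^ (min ((j : ℕ) - 1) (n - (j : ℕ) - 1)) * ((p : ℚ) ^ 2 + 1)
      else 0) / ((p : ℚ) ^ n * ((p : ℚ) - 1 / (p : ℚ)))

theorem Nat.gcd_pow_pow (p a b : ℕ) : Nat.gcd (p ^ a) (p ^ b) = p ^ min a b := by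
  rcases le_total a b with h | h
  · rw [Nat.gcd_eq_left (pow_dvd_pow p h), min_eq_left h]
  · rw [Nat.gcd_eq_right (pow_dvd_pow p h), min_eq_right h]

theorem Fin.sum_mul_tridiagonal {R : Type*} [NonAssocSemiring R] (f : ℕ → R) {n k : ℕ}
    (hk : k ≤ n) (d c : R) :
    ∑ j : Fin (n + 1), f j * ((if (j : ℕ) = k then d else 0) + (if (j : ℕ) + 1 = k then c else 0)
      + (if k + 1 = (j : ℕ) then c else 0)) =
      f k * d + (if 0 < k then f (k - 1) * c else 0) + (if k < n then f (k + 1) * c else 0) := by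
  rw [Fin.sum_univ_eq_sum_range (fun j : ℕ => f j * ((if j = k then d else 0)
    + (if j + 1 = k then c else 0) + (if k + 1 = j then c else 0)))]
  simp only [mul_add, Finset.sum_add_distrib, mul_ite, mul_zero, Finset.sum_ite_eq',
    Finset.sum_ite_eq, Finset.mem_range]
  rcases k with _ | k
  · simp
  · simp [Nat.lt_of_succ_le hk, Nat.le_of_succ_le hk]

theorem pow_dist_three_term_recurrence {K : Type*} [Field K] (ρ : K) {n i k : ℕ} (hn : 0 < n)
    (hi : i ≤ n) (hk : k ≤ n) :
    ρ ^ Nat.dist i k * (if k = 0 ∨ k = n then 1 else 1 + ρ ^ 2)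
      + (if 0 < k then ρ ^ Nat.dist i (k - 1) * -ρ else 0)
      + (if k < n then ρ ^ Nat.dist i (k + 1) * -ρ else 0) = if i = k then 1 - ρ ^ 2 else 0 := by
  rcases lt_trichotomy i k with h | rfl | h
  · obtain ⟨m, rfl⟩ := Nat.exists_eq_add_of_lt h
    rw [show i.dist (i + m + 1) = m + 1 by unfold Nat.dist; omega,
      show i.dist (i + m + 1 - 1) = m by unfold Nat.dist; omega,
      show i.dist (i + m + 1 + 1) = m + 2 by unfold Nat.dist; omega]
    grind
  · rcases i with _ | i
    · rw [Nat.dist_self, Nat.dist_zero_left]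
      grind
    · rw [show (i + 1).dist (i + 1 - 1) = 1 by unfold Nat.dist; omega,
        show (i + 1).dist (i + 1 + 1) = 1 by unfold Nat.dist; omega, Nat.dist_self]
      grind
  · obtain ⟨m, rfl⟩ := Nat.exists_eq_add_of_lt h
    rw [show (k + m + 1).dist k = m + 1 by unfold Nat.dist; omega,
      show (k + m + 1).dist (k + 1) = m by unfold Nat.dist; omega]
    rcases k with _ | k
    · grind
    · rw [show (k + 1 + m + 1).dist (k + 1 - 1) = m + 2 by unfold Nat.dist; omega]
      grind

namespace Matrix

variable {K : Type*} [Field K]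

/-- The Kac–Murdock–Szegő matrix. -/
def kms (n : ℕ) (ρ : K) : Matrix (Fin (n + 1)) (Fin (n + 1)) K :=
  of fun i j => ρ ^ Nat.dist i j

def kmsInv (n : ℕ) (ρ : K) : Matrix (Fin (n + 1)) (Fin (n + 1)) K :=
  (1 - ρ ^ 2)⁻¹ • of fun j k : Fin (n + 1) =>
    (if (j : ℕ) = k then (if (k : ℕ) = 0 ∨ (k : ℕ) = n then 1 else 1 + ρ ^ 2) else 0)
      + (if (j : ℕ) + 1 = k then -ρ else 0) + (if (k : ℕ) + 1 = j then -ρ else 0)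

theorem kms_mul_kmsInv {n : ℕ} (hn : 0 < n) {ρ : K} (hρ : ρ ^ 2 ≠ 1) :
    kms n ρ * kmsInv n ρ = 1 := by
  ext i k
  rw [kmsInv, Matrix.mul_smul, Matrix.smul_apply, mul_apply]
  simp only [kms, of_apply]
  rw [Fin.sum_mul_tridiagonal (fun j => ρ ^ Nat.dist i j) (Nat.lt_succ_iff.mp k.isLt),
    pow_dist_three_term_recurrence ρ hn (Nat.lt_succ_iff.mp i.isLt) (Nat.lt_succ_iff.mp k.isLt),
    one_apply, smul_ite, smul_zero, smul_eq_mul, inv_mul_cancel₀ (sub_ne_zero.mpr (Ne.symm hρ))]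
  simp only [Fin.val_inj]

end Matrix

open Matrix

theorem orderMatrix_eq_diagonal_mul_kms {p : ℕ} (hp : p ≠ 0) (n : ℕ) :
    orderMatrix p n =
      diagonal (fun i : Fin (n + 1) => (p : ℚ) ^ max (i : ℕ) (n - i)) * kms n (p : ℚ)⁻¹ := by
  have hq : (p : ℚ) ≠ 0 := by exact_mod_cast hp
  ext i j
  simp only [orderMatrix, kms, diagonal_mul, of_apply, Nat.gcd_pow_pow]
  push_cast
  rw [div_eq_iff (by positivity), inv_pow]
  field_simp
  simp only [← pow_mul, ← pow_add]
  congr 1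
  unfold Nat.dist
  omega

theorem orderMatrixInv_eq_kmsInv_mul_diagonal {p : ℕ} (hp : p ≠ 0) (n : ℕ) :
    orderMatrixInv p n =
      kmsInv n (p : ℚ)⁻¹ * diagonal (fun k : Fin (n + 1) => ((p : ℚ) ^ max (k : ℕ) (n - k))⁻¹) := by
  have hq : (p : ℚ) ≠ 0 := by exact_mod_cast hp
  ext j k
  simp only [orderMatrixInv, kmsInv, mul_diagonal, of_apply, Matrix.smul_apply, smul_eq_mul]
  have hk : (k : ℕ) ≤ n := Nat.lt_succ_iff.mp k.isLt
  have hpow : (p : ℚ) ^ n = p ^ min (k : ℕ) (n - k) * p ^ max (k : ℕ) (n - k) := by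
    rw [← pow_add]; congr 1; omega
  rcases (by omega : (j : ℕ) = k ∨ (j : ℕ) + 1 = k ∨ (k : ℕ) + 1 = j ∨
    ((j : ℕ) ≠ k ∧ (j : ℕ) + 1 ≠ k ∧ (k : ℕ) + 1 ≠ j)) with h | h | h | ⟨h₁, h₂, h₃⟩
  · simp only [h, true_and, add_eq_left, one_ne_zero, if_true, if_false, or_false, add_zero]
    split_ifs with hend
    · rw [show (p : ℚ) ^ n = p ^ max (k : ℕ) (n - k) by congr 1; omega]
      field_simp
    · rw [show (p : ℚ) ^ n = p ^ min ((k : ℕ) - 1) (n - k - 1) * p ^ max (k : ℕ) (n - k) * p by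
        rw [← pow_add, ← pow_succ]; congr 1; omega]
      field_simp
  · simp only [h, show (j : ℕ) ≠ k by omega, show (k : ℕ) + 1 ≠ j by omega, false_and, true_or,
      if_true, if_false, zero_add, add_zero, hpow]
    field_simp
  · simp only [h, show (j : ℕ) ≠ k by omega, show (j : ℕ) + 1 ≠ k by omega, false_and, or_true,
      if_true, if_false, zero_add, add_zero, hpow]
    field_simp
  · simp [h₁, h₂, h₃]

/-- `A_{p^n}` is invertible over `ℚ` with the stated tridiagonal inverse. -/
theorem stmt_1 (p n : ℕ) (hp : p.Prime) (hn : 0 < n) :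
    orderMatrix p n * orderMatrixInv p n = 1 ∧ orderMatrixInv p n * orderMatrix p n = 1 := by
  have hρ : ((p : ℚ)⁻¹) ^ 2 ≠ 1 := by
    rw [inv_pow, Ne, inv_eq_one]
    exact (one_lt_pow₀ (by exact_mod_cast hp.one_lt) two_ne_zero).ne'
  have h : orderMatrix p n * orderMatrixInv p n = 1 := by
    rw [orderMatrix_eq_diagonal_mul_kms hp.ne_zero, orderMatrixInv_eq_kmsInv_mul_diagonal hp.ne_zero,
      Matrix.mul_assoc, ← Matrix.mul_assoc (kms _ _), kms_mul_kmsInv hn hρ, Matrix.one_mul,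
      diagonal_mul_diagonal]
    simp [hp.ne_zero]
  exact ⟨h, mul_eq_one_comm.mp h⟩
end

section
/- Let p be a prime and n > 3 an integer. Define the (n+1)×(n+1) integer matrices U and U' as follows. U(i,0)=0 for i<n, U(n,0)=1; for j>0: U(i,j) = −p^{j−i−1} if i<n−1 and j>i, U(i,j)=0 if i<n−1 and j≤i, U(n−1,j) = −p^{n−j}·(p^{2(j−1)}−1)/(p^2−1), and U(n,j) = p^j. U' is given by: U'(0,0)=p, U'(0,n)=1, U'(0,j)=0 for 0<j<n; for 0<i<n−1: U'(i,0)=−1 if i=1 else 0, U'(i,j)=p if i=j, −1 if i=j+1, 0 otherwise for 0<j<n−2, U'(i,n−2)=p if i=n−2; and U'(n−1,j)=−p^{n−j} for 0<j<n−2, U'(n−1,n−2)=−(p^2+1), U'(n−1,n−1)=p, U'(n,j)=p^{n−j−1} for 0<j<n−2, U'(n,n−2)=p, U'(n,n−1)=−1, with remaining entries 0. Then U·U' equals the identity matrix. -/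
/-- The matrix `U` from the Smith normal form factorization of `B_{p^n}` (`n > 3`),
with `(p^{2(j-1)} - 1)/(p^2 - 1) = 1 + p^2 + ⋯ + p^{2(j-2)}`. -/
def Uent (p n i j : ℕ) : ℤ :=
  if j = 0 then (if i = n then 1 else 0)
  else if i = n then (p : ℤ) ^ j
  else if i = n - 1 then -(p : ℤ) ^ (n - j) * ∑ k ∈ Finset.range (j - 1), (p : ℤ) ^ (2 * k)
  else if i < j then -(p : ℤ) ^ (j - i - 1)
  else 0

/-- The matrix `U'` from the Smith normal form factorization of `B_{p^n}` (`n > 3`). -/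
def U'ent (p n i j : ℕ) : ℤ :=
  if i = 0 then (if j = 0 then (p : ℤ) else if j = n then 1 else 0)
  else if i = n - 1 then
    (if j = 0 then 0 else if j = n - 2 then -((p : ℤ) ^ 2 + 1)
      else if j = n - 1 then (p : ℤ) else if j = n then 0 else -(p : ℤ) ^ (n - j))
  else if i = n then
    (if j = 0 ∨ j = n then 0 else if j = n - 1 then -1 else (p : ℤ) ^ (n - j - 1))
  else
    (if j = 0 then (if i = 1 then -1 else 0)
      else if i = j then (p : ℤ) else if i = j + 1 then -1 else 0)

lemma sum_ind (f : ℕ → ℤ) (N a : ℕ) (c : ℤ) (ha : a < N) :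
    ∑ k ∈ Finset.range N, f k * (if k = a then c else 0) = f a * c := by
  rw [Finset.sum_eq_single a]
  · simp
  · intro b _ hb; simp [hb]
  · intro h; exact absurd (Finset.mem_range.mpr ha) h

lemma Tsucc (p m : ℕ) :
    ∑ k ∈ Finset.range (m+1), (p:ℤ)^(2*k)
      = 1 + (p:ℤ)^2 * ∑ k ∈ Finset.range m, (p:ℤ)^(2*k) := by
  rw [Finset.sum_range_succ',
    Finset.sum_congr rfl (fun x _ => by
      rw [show 2*(x+1) = 2*x + 2 from by ring, pow_add] :
      ∀ x ∈ Finset.range m, (p:ℤ)^(2*(x+1)) = (p:ℤ)^(2*x) * (p:ℤ)^2),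
    ← Finset.sum_mul]
  ring

lemma key (p n : ℕ) (hn : 3 < n) (i j : ℕ) (hi : i ≤ n) (hj : j ≤ n) :
    ∑ k ∈ Finset.range (n+1), Uent p n i k * U'ent p n k j
      = if i = j then 1 else 0 := by
  have hU0 : ∀ i', Uent p n i' 0 = if i' = n then 1 else 0 := fun i' => by simp [Uent]
  have hUn : ∀ j', j' ≠ 0 → Uent p n n j' = (p:ℤ)^j' := fun j' h => by simp [Uent, h]
  have hUm : ∀ j', j' ≠ 0 → Uent p n (n-1) j'
      = -(p:ℤ)^(n-j') * ∑ k ∈ Finset.range (j'-1), (p:ℤ)^(2*k) := fun j' h => by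
    simp [Uent, h, show n-1 ≠ n from by omega]
  have hUi : ∀ i' j', i' < n-1 → j' ≠ 0 →
      Uent p n i' j' = if i' < j' then -(p:ℤ)^(j'-i'-1) else 0 := fun i' j' h1 h2 => by
    simp [Uent, h2, show i' ≠ n from by omega, show i' ≠ n-1 from by omega]
  rcases eq_or_ne j 0 with rfl | hj0
  · -- j = 0
    have hcol : ∀ k ∈ Finset.range (n+1),
        Uent p n i k * U'ent p n k 0
          = Uent p n i k * (if k = 0 then (p:ℤ) else 0)
          + Uent p n i k * (if k = 1 then (-1 : ℤ) else 0) := by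
      intro k hk
      rw [Finset.mem_range] at hk
      rw [← mul_add]
      congr 1
      unfold U'ent
      split_ifs <;> first | omega | norm_num
    rw [Finset.sum_congr rfl hcol, Finset.sum_add_distrib,
      sum_ind _ _ _ _ (by omega), sum_ind _ _ _ _ (by omega)]
    rcases eq_or_ne i n with rfl | hin
    · rw [hU0, hUn 1 one_ne_zero, if_pos rfl, if_neg (by omega)]; ring
    rcases eq_or_ne i (n-1) with rfl | hin1
    · rw [hU0, hUm 1 one_ne_zero]
      simp [show ¬ (n-1 = n) from by omega, show ¬ (n-1 = 0) from by omega]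
    · rw [hU0, hUi i 1 (by omega) one_ne_zero, if_neg hin]
      rcases eq_or_ne i 0 with rfl | hi0
      · simp
      · rw [if_neg (by omega : ¬ i < 1), if_neg hi0]; ring
  rcases eq_or_ne j n with hjn | hjn
  · -- j = n
    have hcol : ∀ k ∈ Finset.range (n+1),
        Uent p n i k * U'ent p n k j
          = Uent p n i k * (if k = 0 then (1:ℤ) else 0) := by
      intro k hk
      rw [Finset.mem_range] at hk
      congr 1
      unfold U'ent
      split_ifs <;> first | omega | norm_num
    rw [Finset.sum_congr rfl hcol, sum_ind _ _ _ _ (by omega)]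
    rw [hU0, hjn]
    split_ifs <;> norm_num
  rcases eq_or_ne j (n-1) with rfl | hjm
  · -- j = n-1
    have hcol : ∀ k ∈ Finset.range (n+1),
        Uent p n i k * U'ent p n k (n-1)
          = Uent p n i k * (if k = n-1 then (p:ℤ) else 0)
          + Uent p n i k * (if k = n then (-1:ℤ) else 0) := by
      intro k hk
      rw [Finset.mem_range] at hk
      rw [← mul_add]
      congr 1
      unfold U'ent
      split_ifs <;> first | omega | norm_num
    rw [Finset.sum_congr rfl hcol, Finset.sum_add_distrib,
      sum_ind _ _ _ _ (by omega), sum_ind _ _ _ _ (by omega)]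
    rcases eq_or_ne i n with hin | hin
    · rw [hin, hUn (n-1) (by omega), hUn n (by omega), if_neg (by omega)]
      have h1 : (p:ℤ)^(n-1) * (p:ℤ) = (p:ℤ)^n := by
        rw [← pow_succ]; congr 1; omega
      linear_combination h1
    rcases eq_or_ne i (n-1) with rfl | hin1
    · rw [hUm (n-1) (by omega), hUm n (by omega), if_pos rfl,
        show n-(n-1) = 1 from by omega, show n-n = 0 from by omega,
        show n-1-1 = n-2 from by omega]
      have hT : ∑ k ∈ Finset.range (n-1), (p:ℤ)^(2*k)
          = 1 + (p:ℤ)^2 * ∑ k ∈ Finset.range (n-2), (p:ℤ)^(2*k) := by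
        have := Tsucc p (n-2)
        rwa [show n-2+1 = n-1 from by omega] at this
      rw [hT]
      ring
    · have hilt : i < n - 1 := by omega
      rw [hUi i (n-1) hilt (by omega), hUi i n hilt (by omega),
        if_pos (by omega), if_pos (by omega), if_neg (by omega)]
      have h1 : (p:ℤ)^(n-1-i-1) * (p:ℤ) = (p:ℤ)^(n-i-1) := by
        rw [← pow_succ]; congr 1; omega
      linear_combination -h1
  · -- 1 ≤ j ≤ n-2
    have hj2 : j ≤ n - 2 := by omega
    have hcol : ∀ k ∈ Finset.range (n+1),
        Uent p n i k * U'ent p n k j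
          = Uent p n i k * (if k = j then (p:ℤ) else 0)
          + Uent p n i k * (if k = j+1 then (-1 : ℤ) else 0)
          + Uent p n i k * (if k = n-1 then -(p:ℤ)^(n-j) else 0)
          + Uent p n i k * (if k = n then (p:ℤ)^(n-j-1) else 0) := by
      intro k hk
      rw [← mul_add, ← mul_add, ← mul_add]
      congr 1
      unfold U'ent
      split_ifs <;> first | omega | (rw [show n - j = 2 from by omega]; norm_num) | norm_num
    rw [Finset.sum_congr rfl hcol, Finset.sum_add_distrib, Finset.sum_add_distrib,
      Finset.sum_add_distrib, sum_ind _ _ _ _ (by omega), sum_ind _ _ _ _ (by omega),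
      sum_ind _ _ _ _ (by omega), sum_ind _ _ _ _ (by omega)]
    rcases eq_or_ne i n with hin | hin
    · rw [hin, hUn j hj0, hUn (j+1) (by omega), hUn (n-1) (by omega), hUn n (by omega),
        if_neg (by omega)]
      have h1 : (p:ℤ)^(n-1) * (p:ℤ)^(n-j) = (p:ℤ)^n * (p:ℤ)^(n-j-1) := by
        rw [← pow_add, ← pow_add]; congr 1; omega
      linear_combination -h1
    rcases eq_or_ne i (n-1) with rfl | hin1
    · rw [hUm j hj0, hUm (j+1) (by omega), hUm (n-1) (by omega), hUm n (by omega),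
        if_neg (by omega), show j+1-1 = j from by omega, show n-(n-1) = 1 from by omega,
        show n-n = 0 from by omega, show n-1-1 = n-2 from by omega,
        show n-(j+1) = n-j-1 from by omega]
      have hT1 : ∑ k ∈ Finset.range j, (p:ℤ)^(2*k)
          = 1 + (p:ℤ)^2 * ∑ k ∈ Finset.range (j-1), (p:ℤ)^(2*k) := by
        have := Tsucc p (j-1)
        rwa [show j-1+1 = j from by omega] at this
      have hT2 : ∑ k ∈ Finset.range (n-1), (p:ℤ)^(2*k)
          = 1 + (p:ℤ)^2 * ∑ k ∈ Finset.range (n-2), (p:ℤ)^(2*k) := by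
        have := Tsucc p (n-2)
        rwa [show n-2+1 = n-1 from by omega] at this
      rw [hT1, hT2, show (p:ℤ)^(n-j) = (p:ℤ)^(n-j-1) * p from by rw [← pow_succ]; congr 1; omega]
      ring
    · have hilt : i < n - 1 := by omega
      rw [hUi i j hilt hj0, hUi i (j+1) hilt (by omega), hUi i (n-1) hilt (by omega),
        hUi i n hilt (by omega), if_pos (show i < n-1 from hilt), if_pos (show i < n from by omega)]
      rcases lt_trichotomy i j with hij | rfl | hij
      · rw [if_pos hij, if_pos (by omega), if_neg (by omega)]
        have h1 : (p:ℤ)^(j-i-1) * (p:ℤ) = (p:ℤ)^(j+1-i-1) := by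
          rw [← pow_succ]; congr 1; omega
        have h2 : (p:ℤ)^(n-1-i-1) * (p:ℤ)^(n-j) = (p:ℤ)^(n-i-1) * (p:ℤ)^(n-j-1) := by
          rw [← pow_add, ← pow_add]; congr 1; omega
        linear_combination -h1 + h2
      · rw [if_neg (lt_irrefl i), if_pos (by omega), if_pos rfl,
          show i+1-i-1 = 0 from by omega, pow_zero]
        have h2 : (p:ℤ)^(n-1-i-1) * (p:ℤ)^(n-i) = (p:ℤ)^(n-i-1) * (p:ℤ)^(n-i-1) := by
          rw [← pow_add, ← pow_add]; congr 1; omega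
        linear_combination h2
      · rw [if_neg (by omega), if_neg (by omega), if_neg (by omega)]
        have h2 : (p:ℤ)^(n-1-i-1) * (p:ℤ)^(n-j) = (p:ℤ)^(n-i-1) * (p:ℤ)^(n-j-1) := by
          rw [← pow_add, ← pow_add]; congr 1; omega
        linear_combination h2


/-- `U · U'` is the identity matrix. -/
theorem stmt_3 (p n : ℕ) (hp : p.Prime) (hn : 3 < n) :
    (Matrix.of fun i j : Fin (n + 1) => Uent p n (i : ℕ) (j : ℕ)) *
      (Matrix.of fun i j : Fin (n + 1) => U'ent p n (i : ℕ) (j : ℕ)) = 1 := by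
  ext i j
  rw [Matrix.mul_apply, Matrix.one_apply]
  have h := key p n hn (i : ℕ) (j : ℕ) (by omega) (by omega)
  rw [← Fin.sum_univ_eq_sum_range (fun k => Uent p n (i : ℕ) k * U'ent p n k (j : ℕ))] at h
  simp only [Matrix.of_apply]
  rw [h]
  simp [Fin.ext_iff]
end

section
/- For any positive integer N, any divisor d of N, and any divisor t of N, the quantity N·gcd(d,t)^2/(24·d·gcd(t^2,N)) lies in (1/24)·N — that is, N·gcd(d,t)^2/(d·gcd(t^2,N)) is a positive integer. -/
/-- `A(N,t,d) = N·gcd(d,t)^2/(d·gcd(t^2,N))`. -/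
noncomputable def cuspOrd (N t d : ℕ) : ℚ :=
  ((N * (Nat.gcd d t) ^ 2 : ℕ) : ℚ) / ((d * Nat.gcd (t ^ 2) N : ℕ) : ℚ)

lemma key_dvd (N d t : ℕ) (hN : 0 < N) (hd : d ∣ N) (ht : t ∣ N) :
    d * Nat.gcd (t ^ 2) N ∣ N * (Nat.gcd d t) ^ 2 := by
  have hd0 : d ≠ 0 := by rintro rfl; simp at hd; omega
  have ht0 : t ≠ 0 := by rintro rfl; simp at ht; omega
  have hN0 : N ≠ 0 := hN.ne'
  rw [← Nat.factorization_le_iff_dvd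
    (Nat.mul_pos (Nat.pos_of_ne_zero hd0) (Nat.gcd_pos_of_pos_right _ hN)).ne'
    (Nat.mul_pos hN (pow_pos (Nat.gcd_pos_of_pos_left _ (Nat.pos_of_ne_zero hd0)) 2)).ne']
  intro p
  have hdn : d.factorization p ≤ N.factorization p :=
    (Nat.factorization_le_iff_dvd hd0 hN0).2 hd p
  have htn : t.factorization p ≤ N.factorization p :=
    (Nat.factorization_le_iff_dvd ht0 hN0).2 ht p
  simp only [Nat.factorization_mul hd0 (Nat.gcd_ne_zero_right hN0),
    Nat.factorization_mul hN0 (pow_ne_zero 2 (Nat.gcd_ne_zero_right ht0)),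
    Nat.factorization_gcd (pow_ne_zero 2 ht0) hN0,
    Nat.factorization_gcd hd0 ht0, Nat.factorization_pow,
    Finsupp.coe_add, Finsupp.inf_apply, Finsupp.coe_smul, Pi.add_apply,
    Pi.smul_apply, smul_eq_mul]
  omega

/-- For any `N ≥ 1` and divisors `d, t` of `N`, the quantity
`N·gcd(d,t)^2/(d·gcd(t^2,N))` is a positive integer; equivalently, the order
`N·gcd(d,t)^2/(24·d·gcd(t^2,N))` of `η_d` at the cusp `1/t` lies in `(1/24)·ℕ`. -/
theorem stmt_14 (N d t : ℕ) (hN : 0 < N) (hd : d ∣ N) (ht : t ∣ N) :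
    ∃ k : ℕ, 0 < k ∧ cuspOrd N t d = (k : ℚ) := by
  have hd0 : d ≠ 0 := by rintro rfl; simp at hd; omega
  have hden : 0 < d * Nat.gcd (t ^ 2) N :=
    Nat.mul_pos (Nat.pos_of_ne_zero hd0) (Nat.gcd_pos_of_pos_right _ hN)
  obtain ⟨k, hk⟩ := key_dvd N d t hN hd ht
  refine ⟨k, ?_, ?_⟩
  · rcases Nat.eq_zero_or_pos k with rfl | h
    · exfalso
      have : N * Nat.gcd d t ^ 2 = 0 := by omega
      have hgt : 0 < Nat.gcd d t := Nat.gcd_pos_of_pos_left _ (Nat.pos_of_ne_zero hd0)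
      nlinarith
    · exact h
  · have h0 : ((d * Nat.gcd (t ^ 2) N : ℕ) : ℚ) ≠ 0 := Nat.cast_ne_zero.2 hden.ne'
    rw [cuspOrd, hk, Nat.cast_mul, mul_div_cancel_left₀ _ h0]
end

section
/- Let p be a prime and n ≥ 1. Let B_{p^n} be the (n+1)×(n+1) tridiagonal matrix with first row (p, −p, 0, ..., 0), interior rows with diagonal entries p^2+1 and off-diagonal entries −p, except B(1,0) = −1 and B(n−1,n) = −1, and last row (0, ..., 0, −p, p). Then A_{p^n}·B_{p^n} is a diagonal matrix all of whose diagonal entries are positive integers. -/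
lemma gcd_pow_min (p a b : ℕ) : Nat.gcd (p^a) (p^b) = p^(min a b) := by
  rcases le_total a b with h | h
  · rw [min_eq_left h, Nat.gcd_eq_left (pow_dvd_pow _ h)]
  · rw [min_eq_right h, Nat.gcd_eq_right (pow_dvd_pow _ h)]

/-- The tridiagonal matrix `B_{p^n}` (over `ℚ`). -/
def Bmat (p n : ℕ) : Matrix (Fin (n + 1)) (Fin (n + 1)) ℚ :=
  Matrix.of fun i j =>
    if (i : ℕ) = (j : ℕ) then (if (i : ℕ) = 0 ∨ (i : ℕ) = n then (p : ℚ) else (p : ℚ) ^ 2 + 1)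
    else if (i : ℕ) + 1 = (j : ℕ) then (if (i : ℕ) + 1 = n then -1 else -(p : ℚ))
    else if (j : ℕ) + 1 = (i : ℕ) then (if (i : ℕ) = 1 then -1 else -(p : ℚ))
    else 0

lemma Aval (p n : ℕ) (i k : Fin (n+1)) :
    orderMatrix p n i k =
      (p:ℚ)^(n + 2 * min (i:ℕ) (k:ℕ)) / (p:ℚ)^((k:ℕ) + min (2*(i:ℕ)) n) := by
  simp only [orderMatrix, Matrix.of_apply, gcd_pow_min]
  push_cast
  rw [pow_add, pow_add, pow_mul]
  ring

lemma Bzero (p n : ℕ) (k j : Fin (n+1)) (h1 : (k:ℕ) ≠ (j:ℕ)) (h2 : (k:ℕ)+1 ≠ (j:ℕ))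
    (h3 : (j:ℕ)+1 ≠ (k:ℕ)) : Bmat p n k j = 0 := by
  simp only [Bmat, Matrix.of_apply]
  rw [if_neg h1, if_neg h2, if_neg h3]

lemma Bdiag (p n : ℕ) (k j : Fin (n+1)) (h : (k:ℕ) = (j:ℕ)) :
    Bmat p n k j = if (k:ℕ) = 0 ∨ (k:ℕ) = n then (p:ℚ) else (p:ℚ)^2 + 1 := by
  simp only [Bmat, Matrix.of_apply]
  rw [if_pos h]

lemma Bsup (p n : ℕ) (k j : Fin (n+1)) (h : (k:ℕ)+1 = (j:ℕ)) :
    Bmat p n k j = if (k:ℕ)+1 = n then -1 else -(p:ℚ) := by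
  simp only [Bmat, Matrix.of_apply]
  rw [if_neg (by omega), if_pos h]

lemma Bsub (p n : ℕ) (k j : Fin (n+1)) (h : (j:ℕ)+1 = (k:ℕ)) :
    Bmat p n k j = if (k:ℕ) = 1 then -1 else -(p:ℚ) := by
  simp only [Bmat, Matrix.of_apply]
  rw [if_neg (by omega), if_neg (by omega), if_pos h]

/-- `A_{p^n} · B_{p^n}` is a diagonal matrix all of whose diagonal entries are
positive integers. -/
theorem stmt_15 (p n : ℕ) (hp : p.Prime) (hn : 1 ≤ n) :
    ∃ dvec : Fin (n + 1) → ℕ, (∀ i, 0 < dvec i) ∧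
      orderMatrix p n * Bmat p n = Matrix.diagonal (fun i => (dvec i : ℚ)) := by
  have hp2 : 2 ≤ p := hp.two_le
  have hq : (p:ℚ) ≠ 0 := Nat.cast_ne_zero.mpr (by omega)
  have hp4 : 4 ≤ p^2 := by nlinarith
  have hcast : ((p^2 - 1 : ℕ) : ℚ) = (p:ℚ)^2 - 1 := by
    rw [Nat.cast_sub (by omega)]; push_cast; ring
  obtain ⟨n', rfl⟩ : ∃ n', n = n' + 1 := ⟨n - 1, by omega⟩
  refine ⟨fun i => (p^2 - 1) * p^(if (i:ℕ) = 0 ∨ (i:ℕ) = n' + 1 then n' + 1 - 1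
      else n' + 1 + (i:ℕ) - min (2*(i:ℕ)) (n'+1)),
    fun i => Nat.mul_pos (by omega) (pow_pos (by omega) _), ?_⟩
  ext i j
  rw [Matrix.mul_apply, Matrix.diagonal_apply]
  have hilt := i.isLt
  have hjlt := j.isLt
  by_cases hj0 : (j:ℕ) = 0
  · -- column 0 : entries at k = 0 (value p) and k = 1 (value -1)
    have hsum : ∑ k, orderMatrix p (n'+1) i k * Bmat p (n'+1) k j
        = orderMatrix p (n'+1) i ⟨0, by omega⟩ * Bmat p (n'+1) ⟨0, by omega⟩ j
        + orderMatrix p (n'+1) i ⟨1, by omega⟩ * Bmat p (n'+1) ⟨1, by omega⟩ j := by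
      rw [← Finset.sum_subset
        (Finset.subset_univ {(⟨0, by omega⟩ : Fin (n'+1+1)), ⟨1, by omega⟩})
        (fun x _ hx => by
          simp only [Finset.mem_insert, Finset.mem_singleton, Fin.ext_iff, Fin.val_mk] at hx
          push_neg at hx
          rw [Bzero _ _ _ _ (by omega) (by omega) (by omega), mul_zero])]
      rw [Finset.sum_insert (by simp [Fin.ext_iff]), Finset.sum_singleton]
    rw [hsum, Bdiag _ _ _ _ (by simp only [Fin.val_mk]; omega),
      Bsub _ _ _ _ (by simp only [Fin.val_mk]; omega), Aval, Aval]
    simp only [Fin.val_mk, true_or, or_true, if_true]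
    by_cases hi0 : (i:ℕ) = 0
    · rw [if_pos (Fin.ext (by omega) : i = j), if_pos (Or.inl hi0)]
      have e1 : min (2*(i:ℕ)) (n'+1) = 0 := by omega
      have e2 : min (i:ℕ) 1 = 0 := by omega
      have e3 : min (i:ℕ) 0 = 0 := by omega
      have e4 : n' + 1 - 1 = n' := by omega
      rw [e1, e2, e3, e4, Nat.cast_mul, hcast, Nat.cast_pow]
      field_simp
      ring
    · rw [if_neg (fun h => hi0 (by rw [Fin.ext_iff] at h; omega))]
      have e2 : min (i:ℕ) 1 = 1 := by omega
      have e3 : min (i:ℕ) 0 = 0 := by omega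
      rw [e2, e3]
      generalize min (2*(i:ℕ)) (n'+1) = m
      field_simp
      ring
  · by_cases hjn : (j:ℕ) = n' + 1
    · -- column n : entries at k = n-1 (value -1) and k = n (value p)
      have hsum : ∑ k, orderMatrix p (n'+1) i k * Bmat p (n'+1) k j
          = orderMatrix p (n'+1) i ⟨n', by omega⟩ * Bmat p (n'+1) ⟨n', by omega⟩ j
          + orderMatrix p (n'+1) i ⟨n'+1, by omega⟩ * Bmat p (n'+1) ⟨n'+1, by omega⟩ j := by
        rw [← Finset.sum_subset
          (Finset.subset_univ {(⟨n', by omega⟩ : Fin (n'+1+1)), ⟨n'+1, by omega⟩})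
          (fun x _ hx => by
            simp only [Finset.mem_insert, Finset.mem_singleton, Fin.ext_iff, Fin.val_mk] at hx
            push_neg at hx
            rw [Bzero _ _ _ _ (by omega) (by omega) (by omega), mul_zero])]
        rw [Finset.sum_insert (by simp [Fin.ext_iff]), Finset.sum_singleton]
      rw [hsum, Bsup _ _ _ _ (by simp only [Fin.val_mk]; omega),
        Bdiag _ _ _ _ (by simp only [Fin.val_mk]; omega), Aval, Aval]
      simp only [Fin.val_mk, true_or, or_true, if_true]
      by_cases hin : (i:ℕ) = n' + 1
      · rw [if_pos (Fin.ext (by omega) : i = j), if_pos (Or.inr hin)]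
        have e1 : min (2*(i:ℕ)) (n'+1) = n' + 1 := by omega
        have e2 : min (i:ℕ) n' = n' := by omega
        have e3 : min (i:ℕ) (n'+1) = n' + 1 := by omega
        have e4 : n' + 1 - 1 = n' := by omega
        rw [e1, e2, e3, e4, Nat.cast_mul, hcast, Nat.cast_pow]
        field_simp
        ring
      · rw [if_neg (fun h => hin (by rw [Fin.ext_iff] at h; omega))]
        have e2 : min (i:ℕ) n' = (i:ℕ) := by omega
        have e3 : min (i:ℕ) (n'+1) = (i:ℕ) := by omega
        rw [e2, e3]
        generalize min (2*(i:ℕ)) (n'+1) = m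
        field_simp
        ring
    · -- interior column j, 1 ≤ j ≤ n-1
      obtain ⟨j', hj'⟩ : ∃ j', (j:ℕ) = j' + 1 := ⟨(j:ℕ) - 1, by omega⟩
      have hsum : ∑ k, orderMatrix p (n'+1) i k * Bmat p (n'+1) k j
          = orderMatrix p (n'+1) i ⟨j', by omega⟩ * Bmat p (n'+1) ⟨j', by omega⟩ j
          + orderMatrix p (n'+1) i j * Bmat p (n'+1) j j
          + orderMatrix p (n'+1) i ⟨(j:ℕ)+1, by omega⟩ * Bmat p (n'+1) ⟨(j:ℕ)+1, by omega⟩ j := by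
        rw [← Finset.sum_subset
          (Finset.subset_univ {(⟨j', by omega⟩ : Fin (n'+1+1)), j, ⟨(j:ℕ)+1, by omega⟩})
          (fun x _ hx => by
            simp only [Finset.mem_insert, Finset.mem_singleton, Fin.ext_iff, Fin.val_mk] at hx
            push_neg at hx
            rw [Bzero _ _ _ _ (by omega) (by omega) (by omega), mul_zero])]
        rw [Finset.sum_insert (by
            intro hmem
            simp only [Finset.mem_insert, Finset.mem_singleton, Fin.ext_iff, Fin.val_mk] at hmem
            omega),
          Finset.sum_insert (by
            intro hmem
            simp only [Finset.mem_singleton, Fin.ext_iff, Fin.val_mk] at hmem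
            try omega), Finset.sum_singleton]
        ring
      rw [hsum, Bsup _ _ _ _ (by simp only [Fin.val_mk]; omega),
        Bdiag _ _ _ _ rfl, Bsub _ _ _ _ (by simp only [Fin.val_mk]),
        Aval, Aval, Aval]
      simp only [Fin.val_mk]
      rw [if_neg (by omega), if_neg (by omega), if_neg (by omega)]
      rcases lt_trichotomy (i:ℕ) (j:ℕ) with hij | hij | hij
      · -- i < j
        rw [if_neg (fun h => by rw [Fin.ext_iff] at h; omega)]
        have e1 : min (i:ℕ) j' = (i:ℕ) := by omega
        have e2 : min (i:ℕ) (j:ℕ) = (i:ℕ) := by omega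
        have e3 : min (i:ℕ) ((j:ℕ)+1) = (i:ℕ) := by omega
        rw [e1, e2, e3, hj']
        generalize min (2*(i:ℕ)) (n'+1) = m
        field_simp
        ring
      · -- i = j
        rw [if_pos (Fin.ext hij : i = j), if_neg (by omega)]
        have e1 : min (i:ℕ) j' = j' := by omega
        have e2 : min (i:ℕ) (j:ℕ) = (j:ℕ) := by omega
        have e3 : min (i:ℕ) ((j:ℕ)+1) = (j:ℕ) := by omega
        rw [e1, e2, e3, hij, hj']
        rw [Nat.cast_mul, hcast, Nat.cast_pow]
        by_cases hm : 2 * (i:ℕ) ≤ n' + 1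
        · obtain ⟨c, hc⟩ : ∃ c, n' = j' + c := ⟨n' - j', by omega⟩
          have e5 : min (2*(j'+1)) (n'+1) = 2 * (j' + 1) := by omega
          rw [e5]
          have e6 : n' + 1 + (j'+1) - 2*(j'+1) = c := by omega
          rw [e6, hc]
          field_simp
          ring
        · have e5 : min (2*(j'+1)) (n'+1) = n' + 1 := by omega
          rw [e5]
          have e6 : n' + 1 + (j'+1) - (n'+1) = j' + 1 := by omega
          rw [e6]
          field_simp
          ring
      · -- i > j
        rw [if_neg (fun h => by rw [Fin.ext_iff] at h; omega)]
        have e1 : min (i:ℕ) j' = j' := by omega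
        have e2 : min (i:ℕ) (j:ℕ) = (j:ℕ) := by omega
        have e3 : min (i:ℕ) ((j:ℕ)+1) = (j:ℕ)+1 := by omega
        rw [e1, e2, e3, hj']
        generalize min (2*(i:ℕ)) (n'+1) = m
        field_simp
        ring
end
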